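/- Let F be a tournament and let z ≥ 2 be an integer such that every tournament on z vertices contains a copy of F, while some tournament on z−1 vertices contains no copy of F. Then for every n, exo(n, F) = e(T(n, z−1)), the number of edges of the Turán graph T(n, z−1). -/

import Mathlib

/-- An oriented graph `G` contains a copy of the oriented graph `F`. -/
def Copies {α β : Type*} (F : α → α → Prop) (G : β → β → Prop) : Prop :=
  ∃ f : α → β, Function.Injective f ∧ ∀ a b, F a b → G (f a) (f b)

/-- The oriented Turán number. -/
noncomputable def exo {α : Type*} (n : ℕ) (F : α → α → Prop) : ℕ :=
  sSup {m : ℕ | ∃ G : Fin n → Fin n → Prop,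
    (∀ v, ¬ G v v) ∧ (∀ u v, G u v → ¬ G v u) ∧
    ¬ Copies F G ∧ {p : Fin n × Fin n | G p.1 p.2}.ncard = m}

/-- A tournament: an asymmetric relation where any two distinct vertices are joined. -/
def IsTournament {α : Type*} (T : α → α → Prop) : Prop :=
  (∀ u v, T u v → ¬ T v u) ∧ ∀ u v, u ≠ v → T u v ∨ T v u

/-- The number of edges of the Turán graph `T(n,k)`. -/
noncomputable def eTuran (n k : ℕ) : ℕ := (SimpleGraph.turanGraph n k).edgeSet.ncard

/-! Blowing up an `F`-free tournament on `z - 1` vertices along the residue classes mod `z - 1`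
gives an `F`-free oriented graph whose underlying graph is `T(n, z - 1)`: a copy of the tournament
`F` cannot put two of its vertices into one class, since they are joined by an arc. Conversely, a
`z`-clique in the underlying graph of an oriented graph carries a tournament on `z` vertices, which
contains `F`; so the underlying graph of an `F`-free oriented graph is `K_z`-free and Turán's
theorem bounds its number of edges. -/

open SimpleGraph

section

variable {α V W : Type*}

theorem Copies.trans {F : α → α → Prop} {G : V → V → Prop} {H : W → W → Prop}
    (hFG : Copies F G) (hGH : Copies G H) : Copies F H := by
  obtain ⟨f, hf, hfG⟩ := hFG
  obtain ⟨g, hg, hgH⟩ := hGH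
  exact ⟨g ∘ f, hg.comp hf, fun a b h => hgH _ _ (hfG a b h)⟩

/-- `p ∘ f` stays injective because `p` cannot collapse an arc of `F` into a loop of `G`. -/
theorem IsTournament.copies_of_copies_comap {F : α → α → Prop} (hF : IsTournament F)
    {G : W → W → Prop} (hG : ∀ w, ¬ G w w) (p : V → W)
    (h : Copies F fun u v => G (p u) (p v)) : Copies F G := by
  obtain ⟨f, -, hf⟩ := h
  have hne : ∀ a b, F a b → p (f a) ≠ p (f b) := fun a b h hab =>
    hG _ (by simpa [hab] using hf a b h)
  refine ⟨p ∘ f, fun a b hab => ?_, hf⟩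
  by_contra hab'
  rcases hF.2 a b hab' with h | h
  exacts [hne a b h hab, hne b a h hab.symm]

theorem isTournament_comap_of_isClique {G : V → V → Prop} (hG : ∀ u v, G u v → ¬ G v u)
    {f : W → V} (hf : Function.Injective f) (hclique : (fromRel G).IsClique (Set.range f)) :
    IsTournament fun a b => G (f a) (f b) :=
  ⟨fun _ _ => hG _ _, fun a b hab =>
    ((fromRel_adj _ _ _).1 (hclique ⟨a, rfl⟩ ⟨b, rfl⟩ (hf.ne hab))).2⟩

theorem ncard_setOf_eq_ncard_edgeSet_fromRel {G : V → V → Prop}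
    (hG : ∀ u v, G u v → ¬ G v u) :
    {p : V × V | G p.1 p.2}.ncard = (fromRel G).edgeSet.ncard := by
  have himage : Function.uncurry Sym2.mk '' {p : V × V | G p.1 p.2} = (fromRel G).edgeSet := by
    ext e
    induction e using Sym2.ind with
    | _ a b =>
      simp only [Set.mem_image, Set.mem_ofPred_eq, mem_edgeSet, fromRel_adj]
      constructor
      · rintro ⟨⟨x, y⟩, hxy, hs⟩
        have hne : x ≠ y := fun h => hG _ _ hxy (h ▸ hxy)
        rcases Sym2.eq_iff.mp hs with ⟨rfl, rfl⟩ | ⟨rfl, rfl⟩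
        exacts [⟨hne, .inl hxy⟩, ⟨hne.symm, .inr hxy⟩]
      · rintro ⟨-, h | h⟩
        exacts [⟨(a, b), h, rfl⟩, ⟨(b, a), h, Sym2.eq_swap⟩]
  rw [← himage]
  refine (Set.InjOn.ncard_image ?_).symm
  rintro ⟨a, b⟩ hab ⟨c, d⟩ hcd hs
  rcases Sym2.eq_iff.mp hs with ⟨rfl, rfl⟩ | ⟨rfl, rfl⟩
  · rfl
  · exact absurd hcd (hG _ _ hab)

theorem cliqueFree_fromRel_of_not_copies {F : α → α → Prop} {z : ℕ}
    (hF : ∀ T : Fin z → Fin z → Prop, IsTournament T → Copies F T)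
    {G : V → V → Prop} (hG : ∀ u v, G u v → ¬ G v u) (hGF : ¬ Copies F G) :
    (fromRel G).CliqueFree z := by
  intro s hs
  let e : s ≃ Fin z := s.equivFinOfCardEq hs.card_eq
  let f : Fin z → V := fun i => e.symm i
  have hf : Function.Injective f := Subtype.val_injective.comp e.symm.injective
  have hrange : Set.range f ⊆ s := by rintro _ ⟨i, rfl⟩; exact (e.symm i).2
  have hT := isTournament_comap_of_isClique hG hf (hs.isClique.subset hrange)
  exact hGF ((hF _ hT).trans ⟨f, hf, fun _ _ h => h⟩)

theorem ncard_setOf_le_eTuran {F : α → α → Prop} {r : ℕ} (hr : 0 < r)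
    (hF : ∀ T : Fin (r + 1) → Fin (r + 1) → Prop, IsTournament T → Copies F T)
    {n : ℕ} {G : Fin n → Fin n → Prop} (hG : ∀ u v, G u v → ¬ G v u) (hGF : ¬ Copies F G) :
    {p : Fin n × Fin n | G p.1 p.2}.ncard ≤ eTuran n r := by
  classical
  rw [ncard_setOf_eq_ncard_edgeSet_fromRel hG, eTuran, ← coe_edgeFinset, ← coe_edgeFinset,
    Set.ncard_coe_finset, Set.ncard_coe_finset]
  exact (isTuranMaximal_turanGraph hr).2 (cliqueFree_fromRel_of_not_copies hF hG hGF)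

def blowup {r : ℕ} (hr : 0 < r) (T : Fin r → Fin r → Prop) (n : ℕ) : Fin n → Fin n → Prop :=
  fun u v => T ⟨u % r, Nat.mod_lt _ hr⟩ ⟨v % r, Nat.mod_lt _ hr⟩

theorem fromRel_blowup {r : ℕ} (hr : 0 < r) {T : Fin r → Fin r → Prop} (hT : IsTournament T)
    (n : ℕ) : fromRel (blowup hr T n) = turanGraph n r := by
  ext u v
  rw [fromRel_adj, turanGraph_adj]
  constructor
  · rintro ⟨-, h | h⟩ hmod
    all_goals
      simp only [blowup, hmod] at h
      exact hT.1 _ _ h h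
  · intro hmod
    exact ⟨fun h => hmod (h ▸ rfl), hT.2 _ _ fun h => hmod (congrArg Fin.val h)⟩

theorem exists_free_orientedGraph_ncard_eq_eTuran {F : α → α → Prop} (hF : IsTournament F)
    {r : ℕ} (hr : 0 < r) {T : Fin r → Fin r → Prop} (hT : IsTournament T) (hTF : ¬ Copies F T)
    (n : ℕ) :
    ∃ G : Fin n → Fin n → Prop, (∀ v, ¬ G v v) ∧ (∀ u v, G u v → ¬ G v u) ∧
      ¬ Copies F G ∧ {p : Fin n × Fin n | G p.1 p.2}.ncard = eTuran n r := by
  have hasymm : ∀ u v, blowup hr T n u v → ¬ blowup hr T n v u := fun _ _ => hT.1 _ _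
  refine ⟨blowup hr T n, fun v h => hasymm v v h h, hasymm, fun h => ?_, ?_⟩
  · exact hTF (hF.copies_of_copies_comap (fun v h => hT.1 v v h h) _ h)
  · rw [ncard_setOf_eq_ncard_edgeSet_fromRel hasymm, fromRel_blowup hr hT]
    rfl

end

theorem stmt_4_general {α : Type*} (F : α → α → Prop) (hF : IsTournament F)
    (z : ℕ) (hz : 2 ≤ z)
    (h1 : ∀ T : Fin z → Fin z → Prop, IsTournament T → Copies F T)
    (h2 : ∃ T : Fin (z - 1) → Fin (z - 1) → Prop, IsTournament T ∧ ¬ Copies F T) :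
    ∀ n : ℕ, exo n F = eTuran n (z - 1) := by
  intro n
  obtain ⟨T, hT, hTF⟩ := h2
  have hr : 0 < z - 1 := by omega
  rw [show z = z - 1 + 1 by omega] at h1
  refine IsGreatest.csSup_eq ⟨exists_free_orientedGraph_ncard_eq_eTuran hF hr hT hTF n, ?_⟩
  rintro m ⟨G, -, hG, hGF, rfl⟩
  exact ncard_setOf_le_eTuran hr h1 hG hGF

/-- let `F` be a tournament and `z ≥ 2` such that every tournament on `z`
vertices contains a copy of `F` while some tournament on `z-1` vertices does not. Then
`exo(n, F) = e(T(n, z-1))` for every `n`. -/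
theorem stmt_4 {α : Type*} [Fintype α] (F : α → α → Prop) (hF : IsTournament F)
    (z : ℕ) (hz : 2 ≤ z)
    (h1 : ∀ T : Fin z → Fin z → Prop, IsTournament T → Copies F T)
    (h2 : ∃ T : Fin (z - 1) → Fin (z - 1) → Prop, IsTournament T ∧ ¬ Copies F T) :
    ∀ n : ℕ, exo n F = eTuran n (z - 1) :=
  stmt_4_general F hF z hz h1 h2
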